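/- Minimizing over the convex relaxed set attains its minimum at binary functions: let $\psi$ be bounded, measurable, with $\psi > 0$ a.e. on a bounded domain $\Omega$, define $E^\tau(u) = \int_\Omega \psi^2 u\,G_\tau*(1-u)\,dx$ (extending $u$ by zero). If $u^*$ minimizes $E^\tau$ over $\mathcal{K} = \{u \text{ measurable}, u(x)\in[0,1]\}$, then $u^*(x) \in \{0,1\}$ for almost every $x \in \Omega$. -/

import Mathlib

open MeasureTheory Real Filter Asymptotics

noncomputable def G (n : ℕ) (τ : ℝ) (x : EuclideanSpace ℝ (Fin n)) : ℝ :=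
  (4 * π * τ) ^ (-(n : ℝ) / 2) * Real.exp (-‖x‖ ^ 2 / (4 * τ))

noncomputable def conv {n : ℕ} (f g : EuclideanSpace ℝ (Fin n) → ℝ)
    (x : EuclideanSpace ℝ (Fin n)) : ℝ :=
  ∫ y, f (x - y) * g y

lemma G_pos {n : ℕ} {τ : ℝ} (hτ : 0 < τ) (x : EuclideanSpace ℝ (Fin n)) : 0 < G n τ x := by
  unfold G
  have : (0:ℝ) < 4 * π * τ := by positivity
  positivity

lemma G_cont (n : ℕ) (τ : ℝ) : Continuous (G n τ) := by
  unfold G; fun_prop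

lemma G_integrable {n : ℕ} {τ : ℝ} (hτ : 0 < τ) : Integrable (G n τ) := by
  have hb : (0:ℝ) < ((1/(4*τ) : ℝ) : ℂ).re := by simpa using by positivity
  have h := (GaussianFourier.integrable_cexp_neg_mul_sq_norm_add (V := EuclideanSpace ℝ (Fin n))
    hb 0 0).norm
  have h2 : Integrable (fun v : EuclideanSpace ℝ (Fin n) => Real.exp (-(1/(4*τ)) * ‖v‖^2)) := by
    convert h using 2 with v
    rw [zero_mul, add_zero,
      show (-(((1/(4*τ):ℝ)):ℂ) * ((‖v‖:ℝ):ℂ)^2) = ((-(1/(4*τ)) * ‖v‖^2 : ℝ) : ℂ) by push_cast; ring,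
      Complex.norm_exp, Complex.ofReal_re]
  have h3 := h2.const_mul ((4 * π * τ) ^ (-(n : ℝ) / 2))
  unfold G
  convert h3 using 2 with v
  congr 1
  field_simp

theorem relaxed_minimizer_is_binary (n : ℕ) (τ : ℝ) (hτ : 0 < τ)
    (Ω : Set (EuclideanSpace ℝ (Fin n))) (hΩm : MeasurableSet Ω)
    (hΩb : Bornology.IsBounded Ω)
    (ψ : EuclideanSpace ℝ (Fin n) → ℝ) (hψm : Measurable ψ)
    (hψb : ∃ C, ∀ x, |ψ x| ≤ C)
    (hψpos : ∀ᵐ x ∂(volume.restrict Ω), 0 < ψ x)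
    (u : EuclideanSpace ℝ (Fin n) → ℝ) (hum : Measurable u)
    (hu : ∀ x ∈ Ω, u x ∈ Set.Icc (0 : ℝ) 1)
    (hmin : ∀ v : EuclideanSpace ℝ (Fin n) → ℝ, Measurable v →
      (∀ x ∈ Ω, v x ∈ Set.Icc (0 : ℝ) 1) →
      (∫ x in Ω, ψ x ^ 2 * u x *
          conv (G n τ) (fun y => 1 - Ω.indicator u y) x) ≤
        ∫ x in Ω, ψ x ^ 2 * v x *
          conv (G n τ) (fun y => 1 - Ω.indicator v y) x) :
    ∀ᵐ x, x ∈ Ω → u x = 0 ∨ u x = 1 := by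
  classical
  obtain ⟨C, hC⟩ := hψb
  set g : EuclideanSpace ℝ (Fin n) → ℝ := G n τ with hg
  have gpos : ∀ x, 0 < g x := G_pos hτ
  have gcont : Continuous g := G_cont n τ
  have gint : Integrable g := G_integrable hτ
  have gshift : ∀ x, Integrable (fun y => g (x - y)) := fun x => gint.comp_sub_left x
  set M : ℝ := ∫ y, g y with hMdef
  have hMshift : ∀ x, (∫ y, g (x - y)) = M := fun x => integral_sub_left_eq_self g volume x
  by_contra hcon
  rw [ae_iff] at hcon
  set A : ℕ → Set (EuclideanSpace ℝ (Fin n)) :=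
    fun k => Ω ∩ u ⁻¹' Set.Icc (((k:ℝ)+1)⁻¹) (1 - ((k:ℝ)+1)⁻¹) with hAdef
  have hAm : ∀ k, MeasurableSet (A k) := fun k => hΩm.inter (hum measurableSet_Icc)
  have hsub : {x | ¬(x ∈ Ω → u x = 0 ∨ u x = 1)} ⊆ ⋃ k, A k := by
    intro x hx
    simp only [Set.mem_setOf_eq] at hx
    push_neg at hx
    obtain ⟨hxΩ, hx0, hx1⟩ := hx
    obtain ⟨hu0, hu1⟩ := hu x hxΩ
    have h1 : 0 < u x := lt_of_le_of_ne hu0 (Ne.symm hx0)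
    have h2 : u x < 1 := lt_of_le_of_ne hu1 hx1
    obtain ⟨k, hk⟩ := exists_nat_one_div_lt (lt_min h1 (by linarith : (0:ℝ) < 1 - u x))
    refine Set.mem_iUnion.2 ⟨k, hxΩ, ?_⟩
    rw [one_div] at hk
    have hk1 := lt_of_lt_of_le hk (min_le_left _ _)
    have hk2 := lt_of_lt_of_le hk (min_le_right _ _)
    exact ⟨le_of_lt hk1, by linarith⟩
  have hex : ∃ k, 0 < volume (A k) := by
    by_contra h
    push_neg at h
    have : volume (⋃ k, A k) = 0 :=
      measure_iUnion_null fun k => le_antisymm (h k) (by simp)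
    exact hcon (measure_mono_null hsub this)
  obtain ⟨k, hApos⟩ := hex
  set ε : ℝ := ((k:ℝ)+1)⁻¹ with hεdef
  have hε : 0 < ε := by positivity
  set B : Set (EuclideanSpace ℝ (Fin n)) := A k with hBdef
  have hBm : MeasurableSet B := hAm k
  have hBΩ : B ⊆ Ω := Set.inter_subset_left
  have hBu : ∀ x ∈ B, ε ≤ u x ∧ u x ≤ 1 - ε := fun x hx => hx.2
  set χ : EuclideanSpace ℝ (Fin n) → ℝ := B.indicator (fun _ => (1:ℝ)) with hχdef
  have hχm : Measurable χ := measurable_const.indicator hBm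
  have hχ01 : ∀ y, 0 ≤ χ y ∧ χ y ≤ 1 := by
    intro y
    by_cases hy : y ∈ B <;> simp [hχdef, hy]
  have hiu : ∀ y, 0 ≤ Ω.indicator u y ∧ Ω.indicator u y ≤ 1 := by
    intro y
    by_cases hy : y ∈ Ω
    · simpa [Set.indicator_of_mem hy] using hu y hy
    · simp [Set.indicator_of_notMem hy]
  set K : EuclideanSpace ℝ (Fin n) → ℝ := conv (G n τ) (fun y => 1 - Ω.indicator u y) with hKdef
  set W : EuclideanSpace ℝ (Fin n) → ℝ := conv (G n τ) χ with hWdef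
  have hKeq : ∀ x, K x = ∫ y, g (x - y) * (1 - Ω.indicator u y) := fun x => rfl
  have hWeq : ∀ x, W x = ∫ y, g (x - y) * χ y := fun x => rfl
  have hm1 : Measurable (fun y => (1:ℝ) - Ω.indicator u y) :=
    measurable_const.sub (hum.indicator hΩm)
  have hintK : ∀ x, Integrable (fun y => g (x - y) * (1 - Ω.indicator u y)) := by
    intro x
    have hb : ∃ c : ℝ, ∀ y, ‖(1:ℝ) - Ω.indicator u y‖ ≤ c := by
      refine ⟨1, fun y => ?_⟩
      have := hiu y
      rw [Real.norm_eq_abs, abs_le]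
      constructor <;> linarith [this.1, this.2]
    have := (gshift x).bdd_mul hm1.aestronglyMeasurable (Eventually.of_forall hb.choose_spec)
    simpa [mul_comm] using this
  have hintW : ∀ x, Integrable (fun y => g (x - y) * χ y) := by
    intro x
    have hb : ∃ c : ℝ, ∀ y, ‖χ y‖ ≤ c := by
      refine ⟨1, fun y => ?_⟩
      have := hχ01 y
      rw [Real.norm_eq_abs, abs_le]
      constructor <;> linarith [this.1, this.2]
    have := (gshift x).bdd_mul hχm.aestronglyMeasurable (Eventually.of_forall hb.choose_spec)
    simpa [mul_comm] using this
  have hK0 : ∀ x, 0 ≤ K x := by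
    intro x
    rw [hKeq]
    exact integral_nonneg fun y => mul_nonneg (gpos _).le (by linarith [(hiu y).2])
  have hKM : ∀ x, K x ≤ M := by
    intro x
    rw [hKeq, ← hMshift x]
    exact integral_mono (hintK x) (gshift x) fun y => by
      nlinarith [(gpos (x - y)).le, (hiu y).1, (hiu y).2]
  have hW0 : ∀ x, 0 ≤ W x := by
    intro x
    rw [hWeq]
    exact integral_nonneg fun y => mul_nonneg (gpos _).le (hχ01 y).1
  have hWM : ∀ x, W x ≤ M := by
    intro x
    rw [hWeq, ← hMshift x]
    exact integral_mono (hintW x) (gshift x) fun y => by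
      nlinarith [(gpos (x - y)).le, (hχ01 y).1, (hχ01 y).2]
  have hM0 : 0 ≤ M := le_trans (hK0 0) (hKM 0)
  have hKm : Measurable K := by
    have hsm : StronglyMeasurable (Function.uncurry
        fun x y => g (x - y) * ((1:ℝ) - Ω.indicator u y)) :=
      Measurable.stronglyMeasurable
        ((gcont.measurable.comp (measurable_fst.sub measurable_snd)).mul
          (hm1.comp measurable_snd))
    exact hsm.integral_prod_right'.measurable
  have hWm : Measurable W := by
    have hsm : StronglyMeasurable (Function.uncurry
        fun x y => g (x - y) * χ y) :=
      Measurable.stronglyMeasurable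
        ((gcont.measurable.comp (measurable_fst.sub measurable_snd)).mul
          (hχm.comp measurable_snd))
    exact hsm.integral_prod_right'.measurable
  have hWpos : ∀ x, 0 < W x := by
    intro x
    rw [hWeq]
    rw [integral_pos_iff_support_of_nonneg_ae
      (Eventually.of_forall fun y => mul_nonneg (gpos _).le (hχ01 y).1) (hintW x)]
    refine lt_of_lt_of_le hApos (measure_mono ?_)
    intro y hy
    have h1 : χ y = 1 := Set.indicator_of_mem hy _
    simp only [Function.mem_support, h1, mul_one]
    exact (gpos _).ne'
  have hΩfin : volume Ω ≠ ⊤ := hΩb.measure_lt_top.ne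
  have hCnn : 0 ≤ C := le_trans (abs_nonneg _) (hC 0)
  have hbddint : ∀ (f h : EuclideanSpace ℝ (Fin n) → ℝ), Measurable f → Measurable h →
      (∀ x ∈ Ω, |f x| ≤ 1) → (∀ x, |h x| ≤ M) →
      IntegrableOn (fun x => ψ x ^ 2 * f x * h x) Ω := by
    intro f h hfm hhm hf1 hhM
    apply Measure.integrableOn_of_bounded (M := C ^ 2 * 1 * M) hΩfin
      (((hψm.pow_const 2).mul hfm).mul hhm).aestronglyMeasurable
    filter_upwards [ae_restrict_mem hΩm] with x hx
    rw [Real.norm_eq_abs]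
    simp only [Pi.mul_apply]
    rw [abs_mul, abs_mul, abs_pow]
    have h1 : |ψ x| ^ 2 ≤ C ^ 2 := pow_le_pow_left₀ (abs_nonneg _) (hC x) 2
    have h2 : |ψ x| ^ 2 * |f x| ≤ C ^ 2 * 1 :=
      mul_le_mul h1 (hf1 x hx) (abs_nonneg _) (by positivity)
    exact mul_le_mul h2 (hhM x) (abs_nonneg _) (by positivity)
  have habsu : ∀ x ∈ Ω, |u x| ≤ 1 := fun x hx => by
    obtain ⟨h0, h1⟩ := hu x hx; rw [abs_le]; constructor <;> linarith
  have habsχ : ∀ x ∈ Ω, |χ x| ≤ 1 := fun x _ => by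
    obtain ⟨h0, h1⟩ := hχ01 x; rw [abs_le]; constructor <;> linarith
  have habsK : ∀ x, |K x| ≤ M := fun x => by
    rw [abs_le]; exact ⟨by linarith [hK0 x, hM0], hKM x⟩
  have habsW : ∀ x, |W x| ≤ M := fun x => by
    rw [abs_le]; exact ⟨by linarith [hW0 x, hM0], hWM x⟩
  have hT1 : IntegrableOn (fun x => ψ x ^ 2 * u x * K x) Ω := hbddint u K hum hKm habsu habsK
  have hT2 : IntegrableOn (fun x => ψ x ^ 2 * χ x * K x) Ω := hbddint χ K hχm hKm habsχ habsK
  have hT3 : IntegrableOn (fun x => ψ x ^ 2 * u x * W x) Ω := hbddint u W hum hWm habsu habsW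
  have hT4 : IntegrableOn (fun x => ψ x ^ 2 * χ x * W x) Ω := hbddint χ W hχm hWm habsχ habsW
  set I : ℝ := ∫ x in Ω, ψ x ^ 2 * u x * K x with hIdef
  set P2 : ℝ := ∫ x in Ω, ψ x ^ 2 * χ x * K x with hP2def
  set P3 : ℝ := ∫ x in Ω, ψ x ^ 2 * u x * W x with hP3def
  set Q : ℝ := ∫ x in Ω, ψ x ^ 2 * χ x * W x with hQdef
  -- positivity of Q
  have hQpos : 0 < Q := by
    rw [hQdef]
    have hnn : 0 ≤ᵐ[volume.restrict Ω] fun x => ψ x ^ 2 * χ x * W x :=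
      Eventually.of_forall fun x =>
        mul_nonneg (mul_nonneg (sq_nonneg _) (hχ01 x).1) (hW0 x)
    rw [integral_pos_iff_support_of_nonneg_ae hnn hT4, Measure.restrict_apply' hΩm]
    have hψΩ : volume {x | ¬(x ∈ Ω → 0 < ψ x)} = 0 := by
      have := (ae_restrict_iff' hΩm).1 hψpos
      rwa [ae_iff] at this
    have hBsub : B ⊆ ((Function.support fun x => ψ x ^ 2 * χ x * W x) ∩ Ω) ∪
        {x | ¬(x ∈ Ω → 0 < ψ x)} := by
      intro x hx
      by_cases hψx : 0 < ψ x
      · left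
        refine ⟨?_, hBΩ hx⟩
        have hχ1 : χ x = 1 := Set.indicator_of_mem hx _
        simp only [Function.mem_support, hχ1, mul_one]
        exact (mul_pos (pow_pos hψx 2) (hWpos x)).ne'
      · exact Or.inr fun h => hψx (h (hBΩ hx))
    have hle : volume B ≤ volume ((Function.support fun x => ψ x ^ 2 * χ x * W x) ∩ Ω) := by
      calc volume B ≤ volume (((Function.support fun x => ψ x ^ 2 * χ x * W x) ∩ Ω) ∪
          {x | ¬(x ∈ Ω → 0 < ψ x)}) := measure_mono hBsub
        _ ≤ volume ((Function.support fun x => ψ x ^ 2 * χ x * W x) ∩ Ω) +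
            volume {x | ¬(x ∈ Ω → 0 < ψ x)} := measure_union_le _ _
        _ = _ := by rw [hψΩ, add_zero]
    exact lt_of_lt_of_le hApos hle
  -- the expansion of the energy along perturbations
  have key : ∀ t : ℝ, (∀ x ∈ Ω, u x + t * χ x ∈ Set.Icc (0:ℝ) 1) →
      I ≤ I + t * P2 - t * P3 - t^2 * Q := by
    intro t hv
    have hvm : Measurable (fun x => u x + t * χ x) := hum.add (hχm.const_mul t)
    have h := hmin (fun x => u x + t * χ x) hvm hv
    have hconv : ∀ x, conv g (fun y => 1 - Ω.indicator (fun z => u z + t * χ z) y) x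
        = K x - t * W x := by
      intro x
      have hind : ∀ y, Ω.indicator (fun z => u z + t * χ z) y = Ω.indicator u y + t * χ y := by
        intro y
        by_cases hy : y ∈ Ω
        · simp [Set.indicator_of_mem hy]
        · have hyB : y ∉ B := fun hB => hy (hBΩ hB)
          simp [Set.indicator_of_notMem hy, hχdef, Set.indicator_of_notMem hyB]
      have heq : ∀ y, g (x - y) * (1 - Ω.indicator (fun z => u z + t * χ z) y)
          = g (x - y) * (1 - Ω.indicator u y) - t * (g (x - y) * χ y) := by
        intro y; rw [hind y]; ring
      show (∫ y, g (x - y) * (1 - Ω.indicator (fun z => u z + t * χ z) y)) = K x - t * W x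
      rw [hKeq, hWeq]
      simp_rw [heq]
      rw [integral_sub (hintK x) ((hintW x).const_mul t), integral_const_mul]
    have h2 : (∫ x in Ω, ψ x ^ 2 * (u x + t * χ x) * (K x - t * W x))
        = I + t * P2 - t * P3 - t^2 * Q := by
      have hptwise : ∀ x, ψ x ^ 2 * (u x + t * χ x) * (K x - t * W x)
          = ψ x ^ 2 * u x * K x + t * (ψ x ^ 2 * χ x * K x)
            - t * (ψ x ^ 2 * u x * W x) - t^2 * (ψ x ^ 2 * χ x * W x) := fun x => by ring
      simp_rw [hptwise]
      rw [integral_sub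
          (f := fun x => ψ x ^ 2 * u x * K x + t * (ψ x ^ 2 * χ x * K x)
            - t * (ψ x ^ 2 * u x * W x))
          (g := fun x => t ^ 2 * (ψ x ^ 2 * χ x * W x))
          (by exact (hT1.add (hT2.const_mul t)).sub (hT3.const_mul t))
          (by exact hT4.const_mul (t ^ 2)),
        integral_sub
          (f := fun x => ψ x ^ 2 * u x * K x + t * (ψ x ^ 2 * χ x * K x))
          (g := fun x => t * (ψ x ^ 2 * u x * W x))
          (by exact hT1.add (hT2.const_mul t)) (by exact hT3.const_mul t),
        integral_add
          (f := fun x => ψ x ^ 2 * u x * K x)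
          (g := fun x => t * (ψ x ^ 2 * χ x * K x))
          (by exact hT1) (by exact hT2.const_mul t),
        integral_const_mul, integral_const_mul, integral_const_mul]
    calc I ≤ ∫ x in Ω, ψ x ^ 2 * (u x + t * χ x) *
          conv g (fun y => 1 - Ω.indicator (fun z => u z + t * χ z) y) x := h
      _ = ∫ x in Ω, ψ x ^ 2 * (u x + t * χ x) * (K x - t * W x) := by simp_rw [hconv]
      _ = I + t * P2 - t * P3 - t^2 * Q := h2
  -- apply with t = ε and t = -ε
  have hmem1 : ∀ x ∈ Ω, u x + ε * χ x ∈ Set.Icc (0:ℝ) 1 := by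
    intro x hx
    by_cases hxB : x ∈ B
    · have hχ1 : χ x = 1 := Set.indicator_of_mem hxB _
      obtain ⟨hl, hr⟩ := hBu x hxB
      rw [hχ1]
      constructor <;> simp only [Set.mem_Icc] at * <;> [skip; skip] <;> linarith
    · have hχ0 : χ x = 0 := Set.indicator_of_notMem hxB _
      rw [hχ0, mul_zero, add_zero]
      exact hu x hx
  have hmem2 : ∀ x ∈ Ω, u x + (-ε) * χ x ∈ Set.Icc (0:ℝ) 1 := by
    intro x hx
    by_cases hxB : x ∈ B
    · have hχ1 : χ x = 1 := Set.indicator_of_mem hxB _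
      obtain ⟨hl, hr⟩ := hBu x hxB
      rw [hχ1]
      constructor <;> simp only [Set.mem_Icc] at * <;> [skip; skip] <;> linarith
    · have hχ0 : χ x = 0 := Set.indicator_of_notMem hxB _
      rw [hχ0, mul_zero, add_zero]
      exact hu x hx
  have h1 := key ε hmem1
  have h2 := key (-ε) hmem2
  nlinarith [mul_pos (mul_pos hε hε) hQpos]
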